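/- For every fixed q > 0 and A > 0, g_{q/(2A)}(q/2) → 1 as q → 0⁺, where g_c(x) denotes the unique positive solution in y of y - (y+c)·log(1 + y/c) = log(x). -/

import Mathlib

open Real Filter

lemma F_strictAnti {c : ℝ} (hc : 0 < c) :
    StrictAntiOn (fun y : ℝ => y - (y + c) * Real.log (1 + y / c)) (Set.Ici 0) := by
  have hcont : ContinuousOn (fun y : ℝ => y - (y + c) * Real.log (1 + y / c)) (Set.Ici 0) := by
    intro y hy
    have hy0 : 0 ≤ y := hy
    have hpos : (0:ℝ) < 1 + y / c := by positivity
    have h1 : ContinuousAt (fun y : ℝ => 1 + y / c) y := by fun_prop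
    have h2 : ContinuousAt (fun y : ℝ => Real.log (1 + y / c)) y := h1.log hpos.ne'
    exact ((continuousAt_id.sub ((continuousAt_id.add continuousAt_const).mul h2))).continuousWithinAt
  apply strictAntiOn_of_deriv_neg (convex_Ici 0) hcont
  intro y hy
  rw [interior_Ici] at hy
  have hy0 : 0 < y := hy
  have hpos : (0:ℝ) < 1 + y / c := by positivity
  have hd : HasDerivAt (fun y : ℝ => 1 + y / c) (1 / c) y := by
    simpa using ((hasDerivAt_id y).div_const c).const_add 1
  have hlog := hd.log hpos.ne'
  have hmul : HasDerivAt (fun y : ℝ => (y + c) * Real.log (1 + y / c))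
      (1 * Real.log (1 + y / c) + (y + c) * (1 / c / (1 + y / c))) y :=
    ((hasDerivAt_id y).add_const c).mul hlog
  have hf := (hasDerivAt_id y).sub hmul
  have hkey : (y + c) * (1 / c / (1 + y / c)) = 1 := by
    field_simp; ring
  have hf' : HasDerivAt (fun y : ℝ => y - (y + c) * Real.log (1 + y / c))
      (-(Real.log (1 + y / c))) y := by
    have e : -(Real.log (1 + y / c)) = 1 - (1 * Real.log (1 + y / c) + (y + c) * (1 / c / (1 + y / c))) := by
      rw [hkey]; ring
    rw [e]; exact hf
  rw [hf'.deriv]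
  have : 0 < Real.log (1 + y / c) := Real.log_pos (by nlinarith [div_pos hy0 hc])
  linarith

lemma key (A t : ℝ) (hA : 0 < A) (ht : 0 < t) :
    Tendsto (fun q : ℝ => (t - (t + q / (2 * A)) * Real.log (1 + t / (q / (2 * A))))
        - Real.log (q / 2) - (t - 1) * Real.log q) (nhdsWithin 0 (Set.Ioi 0))
      (nhds (t - t * Real.log t - t * Real.log (2 * A) + Real.log 2)) := by
  have h2A : (0:ℝ) < 2 * A := by linarith
  have hD : Tendsto (fun q : ℝ => t - (t + q / (2 * A)) * Real.log (q / (2 * A) + t)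
      - (t + q / (2 * A)) * Real.log (2 * A) + Real.log 2 + (1 / (2 * A)) * (q * Real.log q))
      (nhdsWithin 0 (Set.Ioi 0))
      (nhds (t - t * Real.log t - t * Real.log (2 * A) + Real.log 2)) := by
    have h1 : ContinuousAt (fun q : ℝ => t + q / (2 * A)) 0 := by fun_prop
    have hlog : ContinuousAt (fun q : ℝ => Real.log (q / (2 * A) + t)) 0 := by
      apply ContinuousAt.log (by fun_prop)
      simpa using ht.ne'
    have hml : ContinuousAt (fun q : ℝ => q * Real.log q) 0 :=
      Real.continuous_mul_log.continuousAt
    have hcont : ContinuousAt (fun q : ℝ => t - (t + q / (2 * A)) * Real.log (q / (2 * A) + t)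
        - (t + q / (2 * A)) * Real.log (2 * A) + Real.log 2 + (1 / (2 * A)) * (q * Real.log q)) 0 :=
      (((continuousAt_const.sub (h1.mul hlog)).sub (h1.mul continuousAt_const)).add
        continuousAt_const).add (continuousAt_const.mul hml)
    have := hcont.tendsto.mono_left (nhdsWithin_le_nhds (s := Set.Ioi 0))
    simpa using this
  apply hD.congr'
  filter_upwards [self_mem_nhdsWithin] with q hq
  have hq0 : (0:ℝ) < q := hq
  have hc : (0:ℝ) < q / (2 * A) := by positivity
  have h1 : 1 + t / (q / (2 * A)) = (q / (2 * A) + t) / (q / (2 * A)) := by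
    field_simp
  rw [h1, Real.log_div (by positivity) hc.ne', Real.log_div hq0.ne' h2A.ne',
    Real.log_div hq0.ne' (by norm_num)]
  ring

/-- If `g c x` denotes the unique positive solution in `y` of
`y - (y + c) * log (1 + y/c) = log x` (for `c > 0`, `x ∈ (0,1)`), then for every
fixed `A > 0`, `g (q/(2A)) (q/2) → 1` as `q → 0⁺`. -/
theorem g_tendsto_one (A : ℝ) (hA : 0 < A) (g : ℝ → ℝ → ℝ)
    (hg : ∀ c : ℝ, 0 < c → ∀ x : ℝ, 0 < x → x < 1 →
      0 < g c x ∧ g c x - (g c x + c) * Real.log (1 + g c x / c) = Real.log x) :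
    Tendsto (fun q : ℝ => g (q / (2 * A)) (q / 2)) (nhdsWithin 0 (Set.Ioi 0)) (nhds 1) := by
  have hq0 : ∀ᶠ q : ℝ in nhdsWithin 0 (Set.Ioi 0), 0 < q := self_mem_nhdsWithin
  have hq2 : ∀ᶠ q : ℝ in nhdsWithin 0 (Set.Ioi 0), q < 2 :=
    eventually_nhdsWithin_of_eventually_nhds (gt_mem_nhds (by norm_num))
  have hbasic : ∀ᶠ q : ℝ in nhdsWithin 0 (Set.Ioi 0),
      0 < g (q / (2 * A)) (q / 2) ∧
      g (q / (2 * A)) (q / 2) - (g (q / (2 * A)) (q / 2) + q / (2 * A)) *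
        Real.log (1 + g (q / (2 * A)) (q / 2) / (q / (2 * A))) = Real.log (q / 2) := by
    filter_upwards [hq0, hq2] with q h0 h2
    exact hg _ (by positivity) _ (by linarith) (by linarith)
  -- eventual comparison lemma
  have hcomp : ∀ t : ℝ, 0 < t → t ≠ 1 →
      ∀ᶠ q : ℝ in nhdsWithin 0 (Set.Ioi 0),
        (1 < t → (t - (t + q / (2 * A)) * Real.log (1 + t / (q / (2 * A)))) < Real.log (q / 2)) ∧
        (t < 1 → Real.log (q / 2) < (t - (t + q / (2 * A)) * Real.log (1 + t / (q / (2 * A))))) := by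
    intro t ht ht1
    rcases lt_or_gt_of_ne ht1 with hlt | hgt
    · -- t < 1 : expression - log(q/2) → atTop
      have hmul : Tendsto (fun q : ℝ => (t - 1) * Real.log q) (nhdsWithin 0 (Set.Ioi 0)) atTop :=
        Real.tendsto_log_nhdsGT_zero.const_mul_atBot_of_neg (by linarith)
      have hK := key A t hA ht
      set L := t - t * Real.log t - t * Real.log (2 * A) + Real.log 2 with hL
      have hge : ∀ᶠ q : ℝ in nhdsWithin 0 (Set.Ioi 0),
          L - 1 ≤ (t - (t + q / (2 * A)) * Real.log (1 + t / (q / (2 * A))))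
            - Real.log (q / 2) - (t - 1) * Real.log q :=
        hK.eventually (eventually_ge_nhds (by linarith))
      have htop : Tendsto (fun q : ℝ =>
          ((t - (t + q / (2 * A)) * Real.log (1 + t / (q / (2 * A)))) - Real.log (q / 2)
            - (t - 1) * Real.log q) + (t - 1) * Real.log q) (nhdsWithin 0 (Set.Ioi 0)) atTop :=
        tendsto_atTop_add_left_of_le' _ (L - 1) hge hmul
      have := htop.eventually_gt_atTop 0
      filter_upwards [this] with q hq
      refine ⟨fun h => absurd h (by linarith), fun _ => by linarith [hq]⟩
    · -- 1 < t : → atBot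
      have hmul : Tendsto (fun q : ℝ => (t - 1) * Real.log q) (nhdsWithin 0 (Set.Ioi 0)) atBot :=
        Real.tendsto_log_nhdsGT_zero.const_mul_atBot (by linarith)
      have hK := key A t hA ht
      set L := t - t * Real.log t - t * Real.log (2 * A) + Real.log 2 with hL
      have hle : ∀ᶠ q : ℝ in nhdsWithin 0 (Set.Ioi 0),
          (t - (t + q / (2 * A)) * Real.log (1 + t / (q / (2 * A))))
            - Real.log (q / 2) - (t - 1) * Real.log q ≤ L + 1 :=
        hK.eventually (eventually_le_nhds (by linarith))
      have hbot : Tendsto (fun q : ℝ =>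
          ((t - (t + q / (2 * A)) * Real.log (1 + t / (q / (2 * A)))) - Real.log (q / 2)
            - (t - 1) * Real.log q) + (t - 1) * Real.log q) (nhdsWithin 0 (Set.Ioi 0)) atBot :=
        tendsto_atBot_add_left_of_ge' _ (L + 1) hle hmul
      have := hbot.eventually_lt_atBot 0
      filter_upwards [this] with q hq
      refine ⟨fun _ => by linarith [hq], fun h => absurd h (by linarith)⟩
  rw [tendsto_order]
  constructor
  · intro a ha
    rcases le_or_gt a 0 with ha0 | ha0
    · filter_upwards [hbasic] with q hq
      exact lt_of_le_of_lt ha0 hq.1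
    · filter_upwards [hbasic, hcomp a ha0 (ne_of_lt ha), hq0] with q hq hcq h0
      have hc : (0:ℝ) < q / (2 * A) := by positivity
      have hF := hcq.2 ha
      by_contra hcon
      push_neg at hcon
      have hmono := (F_strictAnti hc).le_iff_ge (Set.mem_Ici.2 hq.1.le) (Set.mem_Ici.2 ha0.le)
      -- g ≤ a gives F a ≤ F g
      rcases eq_or_lt_of_le hcon with heq | hlt
      · rw [← heq] at hF; rw [hq.2] at hF; exact lt_irrefl _ hF
      · have := (F_strictAnti hc) (Set.mem_Ici.2 hq.1.le) (Set.mem_Ici.2 ha0.le) hlt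
        simp only at this
        rw [hq.2] at this
        linarith
  · intro b hb
    filter_upwards [hbasic, hcomp b (by linarith) (ne_of_gt hb), hq0] with q hq hcq h0
    have hc : (0:ℝ) < q / (2 * A) := by positivity
    have hF := hcq.1 hb
    by_contra hcon
    push_neg at hcon
    rcases eq_or_lt_of_le hcon with heq | hlt
    · rw [heq] at hF; rw [hq.2] at hF; exact lt_irrefl _ hF
    · have := (F_strictAnti hc) (Set.mem_Ici.2 (by linarith : (0:ℝ) ≤ b)) (Set.mem_Ici.2 hq.1.le) hlt
      simp only at this
      rw [hq.2] at this
      linarith
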